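/- Let H₀ = diag(a₁, a₂, a₃) be a real diagonal 3×3 matrix that is strongly regular, and let H₁ be the 3×3 Hermitian matrix with zero diagonal, entries (H₁)₁₂ = b₁ ≠ 0, (H₁)₂₃ = b₂ ≠ 0, and (H₁)₁₃ = 0 (with conjugate entries below the diagonal). If M is a 3×3 complex matrix such that Tr(M · Ad^m_{−iH₀}(−iH₁)) = 0 for every nonnegative integer m, then the (1,2), (2,1), (2,3) and (3,2) entries of M are all zero. -/

import Mathlib

/-!
Since `H₀` is diagonal, `Ad^m_{-iH₀}(-iH₁)` has `(k, ℓ)` entry `(-i)^(m+1) (a_k - a_ℓ)^m (H₁)_{kℓ}`,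
so the hypothesis says that the power sums `∑_{k ≠ ℓ} M_{ℓk} (H₁)_{kℓ} (a_k - a_ℓ)^m` vanish for
all `m`. Strong regularity makes the frequencies `a_k - a_ℓ` pairwise distinct, so the Vandermonde
matrix they span is invertible and every coefficient `M_{ℓk} (H₁)_{kℓ}` is zero.
-/

open Matrix Complex

/-- `Ad^m_{-iH₀}(-iH₁)`: the `m`-fold iterate of `X ↦ [-iH₀, X]` applied to `-iH₁`. -/
noncomputable def adIter {n : ℕ} (H₀ H₁ : Matrix (Fin n) (Fin n) ℂ) (m : ℕ) :
    Matrix (Fin n) (Fin n) ℂ :=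
  (fun X : Matrix (Fin n) (Fin n) ℂ =>
      ((-Complex.I) • H₀) * X - X * ((-Complex.I) • H₀))^[m] ((-Complex.I) • H₁)

def StronglyRegular {n : ℕ} (a : Fin n → ℝ) : Prop :=
  ∀ k ℓ p q : Fin n, k ≠ ℓ → p ≠ q → a ℓ - a k = a q - a p → k = p ∧ ℓ = q

theorem Matrix.eq_zero_of_forall_sum_mul_pow_eq_zero {ι R : Type*} [Fintype ι] [CommRing R]
    [IsDomain R] {x c : ι → R} (hx : Function.Injective x)
    (h : ∀ m : ℕ, ∑ i, c i * x i ^ m = 0) : c = 0 := by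
  let e := (Fintype.equivFin ι).symm
  have hce : c ∘ e = 0 := eq_zero_of_forall_pow_sum_mul_pow_eq_zero (hx.comp e.injective)
    fun m => (e.sum_comp fun i => c i * x i ^ (m : ℕ)).trans (h m)
  funext i
  simpa using congrFun hce (e.symm i)

theorem adIter_diagonal_apply {n : ℕ} (d : Fin n → ℂ) (H : Matrix (Fin n) (Fin n) ℂ) (m : ℕ)
    (k j : Fin n) :
    adIter (diagonal d) H m k j = (-I) ^ (m + 1) * (d k - d j) ^ m * H k j := by
  induction m with
  | zero => simp [adIter]
  | succ m ih =>
    rw [adIter, Function.iterate_succ_apply', ← adIter]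
    simp only [Matrix.sub_apply, smul_mul, Matrix.mul_smul, Matrix.smul_apply, diagonal_mul,
      mul_diagonal, smul_eq_mul, ih]
    ring

theorem trace_mul_adIter_diagonal {n : ℕ} (d : Fin n → ℂ) (H M : Matrix (Fin n) (Fin n) ℂ)
    (m : ℕ) :
    trace (M * adIter (diagonal d) H m)
      = (-I) ^ (m + 1) * ∑ p : Fin n × Fin n, M p.2 p.1 * H p.1 p.2 * (d p.1 - d p.2) ^ m := by
  simp only [trace, Matrix.diag, mul_apply, adIter_diagonal_apply, Fintype.sum_prod_type,
    Finset.mul_sum]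
  rw [Finset.sum_comm]
  exact Finset.sum_congr rfl fun k _ => Finset.sum_congr rfl fun j _ => by ring

theorem StronglyRegular.injective_sub {n : ℕ} {a : Fin n → ℝ} (ha : StronglyRegular a) :
    Function.Injective fun p : {p : Fin n × Fin n // p.1 ≠ p.2} => (a p.1.1 : ℂ) - a p.1.2 := by
  rintro ⟨⟨k, ℓ⟩, h⟩ ⟨⟨k', ℓ'⟩, h'⟩ hω
  obtain ⟨rfl, rfl⟩ := ha ℓ k ℓ' k' h.symm h'.symm
    (ofReal_injective <| by push_cast; exact hω)
  rfl

theorem mul_apply_eq_zero_of_trace_mul_adIter_eq_zero {n : ℕ} {a : Fin n → ℝ}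
    (ha : StronglyRegular a) {H M : Matrix (Fin n) (Fin n) ℂ} (hH : ∀ k, H k k = 0)
    (hM : ∀ m : ℕ, trace (M * adIter (diagonal fun i => (a i : ℂ)) H m) = 0)
    {k ℓ : Fin n} (hkℓ : k ≠ ℓ) : M ℓ k * H k ℓ = 0 := by
  have hsum : ∀ m : ℕ, ∑ p : {p : Fin n × Fin n // p.1 ≠ p.2},
      M p.1.2 p.1.1 * H p.1.1 p.1.2 * ((a p.1.1 : ℂ) - a p.1.2) ^ m = 0 := by
    intro m
    have hdiag : ∑ p : {p : Fin n × Fin n // ¬p.1 ≠ p.2},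
        M p.1.2 p.1.1 * H p.1.1 p.1.2 * ((a p.1.1 : ℂ) - a p.1.2) ^ m = 0 :=
      Fintype.sum_eq_zero _ fun ⟨(i, j), hij⟩ => by
        obtain rfl : i = j := not_not.mp hij
        simp [hH]
    have h := hM m
    rw [trace_mul_adIter_diagonal,
      ← Fintype.sum_subtype_add_sum_subtype (fun p : Fin n × Fin n => p.1 ≠ p.2), hdiag,
      add_zero] at h
    exact (mul_eq_zero.mp h).resolve_left (pow_ne_zero _ (neg_ne_zero.mpr I_ne_zero))
  simpa using congrFun (eq_zero_of_forall_sum_mul_pow_eq_zero ha.injective_sub hsum) ⟨(k, ℓ), hkℓ⟩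

theorem stmt15_general (a : Fin 3 → ℝ)
    (hreg : ∀ k ℓ p q : Fin 3, k ≠ ℓ → p ≠ q →
      a ℓ - a k = a q - a p → k = p ∧ ℓ = q)
    (H₁ : Matrix (Fin 3) (Fin 3) ℂ) (hH₁ : H₁.IsHermitian)
    (hH₁diag : ∀ k : Fin 3, H₁ k k = 0)
    (b₁ b₂ : ℂ) (hb₁ : b₁ ≠ 0) (hb₂ : b₂ ≠ 0)
    (h12 : H₁ 0 1 = b₁) (h23 : H₁ 1 2 = b₂)
    (M : Matrix (Fin 3) (Fin 3) ℂ)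
    (hM : ∀ m : ℕ,
      Matrix.trace (M * adIter (Matrix.diagonal fun i => (a i : ℂ)) H₁ m) = 0) :
    M 0 1 = 0 ∧ M 1 0 = 0 ∧ M 1 2 = 0 ∧ M 2 1 = 0 := by
  have hcoef {k ℓ : Fin 3} (hkℓ : k ≠ ℓ) (hH : H₁ k ℓ ≠ 0) : M ℓ k = 0 :=
    (mul_eq_zero.mp <|
      mul_apply_eq_zero_of_trace_mul_adIter_eq_zero hreg hH₁diag hM hkℓ).resolve_right hH
  have h10 : H₁ 1 0 ≠ 0 := by rw [← hH₁.apply, h12]; exact star_ne_zero.mpr hb₁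
  have h21 : H₁ 2 1 ≠ 0 := by rw [← hH₁.apply, h23]; exact star_ne_zero.mpr hb₂
  exact ⟨hcoef (by decide) h10, hcoef (by decide) (h12 ▸ hb₁), hcoef (by decide) h21,
    hcoef (by decide) (h23 ▸ hb₂)⟩

/-- For `H₀ = diag(a₁,a₂,a₃)` strongly regular and `H₁` Hermitian with
zero diagonal, `(H₁)₁₂ = b₁ ≠ 0`, `(H₁)₂₃ = b₂ ≠ 0`, `(H₁)₁₃ = 0`, any matrix `M`
with `Tr(M · Ad^m_{-iH₀}(-iH₁)) = 0` for all `m ≥ 0` has vanishing `(1,2)`, `(2,1)`,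
`(2,3)` and `(3,2)` entries. -/
theorem stmt15 (a : Fin 3 → ℝ)
    (hreg : ∀ k ℓ p q : Fin 3, k ≠ ℓ → p ≠ q →
      a ℓ - a k = a q - a p → k = p ∧ ℓ = q)
    (H₁ : Matrix (Fin 3) (Fin 3) ℂ) (hH₁ : H₁.IsHermitian)
    (hH₁diag : ∀ k : Fin 3, H₁ k k = 0)
    (b₁ b₂ : ℂ) (hb₁ : b₁ ≠ 0) (hb₂ : b₂ ≠ 0)
    (h12 : H₁ 0 1 = b₁) (h23 : H₁ 1 2 = b₂) (h13 : H₁ 0 2 = 0)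
    (M : Matrix (Fin 3) (Fin 3) ℂ)
    (hM : ∀ m : ℕ,
      Matrix.trace (M * adIter (Matrix.diagonal fun i => (a i : ℂ)) H₁ m) = 0) :
    M 0 1 = 0 ∧ M 1 0 = 0 ∧ M 1 2 = 0 ∧ M 2 1 = 0 :=
  stmt15_general a hreg H₁ hH₁ hH₁diag b₁ b₂ hb₁ hb₂ h12 h23 M hM
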